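/- Let h_{k,j} ∈ ℝ be given for all integers 1 ≤ j ≤ k, and consider the fixed-step algorithm that from any nonexpansive T : ℝ^d → ℝ^d and y₀ ∈ ℝ^d generates y_{k+1} = y_k − Σ_{j=0}^{k} h_{k+1,j+1}·(y_j − T y_j) for all k ≥ 0. Let N ≥ 1 and suppose the algorithm is anytime-beyond-N-steps optimal, i.e. for every k ≥ N−1, every d ≥ 1, every nonexpansive T : ℝ^d → ℝ^d with a fixed point y⋆, and every y₀ ∈ ℝ^d, the iterates satisfy ‖y_k − T y_k‖² ≤ 4‖y₀ − y⋆‖²/(k+1)². Then for every such T, every y₀, and every k ≥ N−1, the iterates satisfy y_{k+1} = (1/(k+2))·y₀ + ((k+1)/(k+2))·T y_k. In particular (taking N = 1), the Optimal Halpern Method is the only such algorithm satisfying ‖y_k − T y_k‖² ≤ 4‖y₀ − y⋆‖²/(k+1)² for all k ≥ 0. -/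

import Mathlib

open Polynomial Finset

noncomputable def geomP (n : ℕ) : Polynomial ℂ := ∑ i ∈ range n, X ^ i
noncomputable def QQ (n : ℕ) : Polynomial ℂ := C ((n : ℂ)⁻¹) * geomP n

lemma degree_geomP_lt (n : ℕ) : (geomP n).degree < n := by
  unfold geomP
  apply lt_of_le_of_lt (degree_sum_le _ _)
  rw [Finset.sup_lt_iff (by exact_mod_cast WithBot.bot_lt_coe n)]
  intro i hi
  refine lt_of_le_of_lt (degree_X_pow_le i) ?_
  exact_mod_cast mem_range.mp hi

lemma degree_QQ_lt (n : ℕ) : (QQ n).degree < n :=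
  lt_of_le_of_lt (degree_mul_le _ _)
    (by
      have h1 : (C ((n:ℂ)⁻¹)).degree ≤ 0 := degree_C_le
      have := add_le_add h1 (le_refl (geomP n).degree)
      refine lt_of_le_of_lt this ?_
      simpa using degree_geomP_lt n)

lemma eval_geomP (n : ℕ) {ω : ℂ} (hω : ω ≠ 1) :
    (geomP n).eval ω = (ω ^ n - 1) / (ω - 1) := by
  simp [geomP, eval_finset_sum, geom_sum_eq hω]

lemma eval_QQ (n : ℕ) {ω : ℂ} (hω : ω ^ n = -1) (hω1 : ω ≠ 1) :
    (QQ n).eval ω = 2 / (n * (1 - ω)) := by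
  have hne : (n : ℂ) ≠ 0 := by
    have hn0 : n ≠ 0 := by rintro rfl; norm_num at hω
    exact_mod_cast hn0
  have h1ω : (1 : ℂ) - ω ≠ 0 := sub_ne_zero.mpr (Ne.symm hω1)
  have h2 : ω - 1 ≠ 0 := sub_ne_zero.mpr hω1
  simp only [QQ, eval_mul, eval_C, eval_geomP n hω1, hω]
  field_simp
  ring

lemma eval_one_geomP (n : ℕ) : (geomP n).eval 1 = n := by simp [geomP, eval_finset_sum]

lemma eval_one_QQ (n : ℕ) (hn : 0 < n) : (QQ n).eval 1 = 1 := by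
  have : (n : ℂ) ≠ 0 := by exact_mod_cast hn.ne'
  simp [QQ, eval_one_geomP, this]

noncomputable def Pn (n : ℕ) : Polynomial ℂ := X ^ n - C (-1)

lemma Pn_ne_zero (hn : 0 < n) : Pn n ≠ 0 := (monic_X_pow_sub_C _ hn.ne').ne_zero

lemma Pn_nodup (hn : 0 < n) : (Pn n).roots.Nodup :=
  nodup_roots (separable_X_pow_sub_C (-1) (by exact_mod_cast hn.ne') (by norm_num))

lemma Pn_roots_card (hn : 0 < n) : Multiset.card (Pn n).roots = n := by
  have := (splits_iff_card_roots.mp (IsAlgClosed.splits (Pn n)))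
  rwa [(by exact natDegree_X_pow_sub_C : (Pn n).natDegree = n)] at this

noncomputable def nodes (n : ℕ) : Finset ℂ := (Pn n).roots.toFinset

lemma mem_nodes (hn : 0 < n) {ω : ℂ} : ω ∈ nodes n ↔ ω ^ n = -1 := by
  rw [nodes, Multiset.mem_toFinset, mem_roots (Pn_ne_zero hn)]
  simp only [Pn, IsRoot, eval_sub, eval_pow, eval_X, eval_C, sub_eq_zero]

lemma card_nodes (hn : 0 < n) : (nodes n).card = n := by
  rw [nodes, Multiset.toFinset_card_of_nodup (Pn_nodup hn), Pn_roots_card hn]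

lemma nodes_val (hn : 0 < n) : (nodes n).val = (Pn n).roots := by
  rw [nodes, Multiset.toFinset_val, Multiset.dedup_eq_self.mpr (Pn_nodup hn)]

lemma prod_nodes (hn : 0 < n) : (∏ z ∈ nodes n, (X - C z)) = Pn n := by
  have h := (IsAlgClosed.splits _).eq_prod_roots_of_monic (monic_X_pow_sub_C (-1 : ℂ) hn.ne')
  rw [Finset.prod, nodes_val hn]
  exact h.symm

lemma node_ne_one {ω : ℂ} (hω : ω ^ n = -1) : ω ≠ 1 := by
  rintro rfl; norm_num at hω

lemma node_ne_zero (hn : 0 < n) {ω : ℂ} (hω : ω ^ n = -1) : ω ≠ 0 := by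
  rintro rfl; rw [zero_pow hn.ne'] at hω; norm_num at hω

lemma node_norm_one (hn : 0 < n) {ω : ℂ} (hω : ω ^ n = -1) : ‖ω‖ = 1 := by
  have h1 : ‖ω‖ ^ n = 1 := by
    rw [← norm_pow, hω]; norm_num
  rcases lt_trichotomy ‖ω‖ 1 with hc | hc | hc
  · exact absurd h1 (by nlinarith [pow_lt_one₀ (norm_nonneg ω) hc hn.ne'])
  · exact hc
  · exact absurd h1 (by nlinarith [one_lt_pow₀ hc hn.ne'])

lemma prod_one_sub_nodes (hn : 0 < n) : (∏ z ∈ nodes n, (1 - z)) = 2 := by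
  have h := congrArg (eval 1) (prod_nodes (n := n) hn)
  simp only [eval_prod, eval_sub, eval_X, eval_C, Pn, eval_pow, one_pow] at h
  rw [h]; norm_num

lemma prod_erase_one_sub (hn : 0 < n) {ω : ℂ} (hω : ω ∈ nodes n) :
    (∏ z ∈ (nodes n).erase ω, (1 - z)) = 2 / (1 - ω) := by
  have h2 := prod_one_sub_nodes hn
  rw [← Finset.mul_prod_erase _ _ hω] at h2
  have hne : (1 : ℂ) - ω ≠ 0 :=
    sub_ne_zero.mpr (Ne.symm (node_ne_one ((mem_nodes hn).mp hω)))
  field_simp [← h2]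
  linear_combination h2

lemma prod_erase_sub (hn : 0 < n) {ω : ℂ} (hω : ω ∈ nodes n) :
    (∏ z ∈ (nodes n).erase ω, (ω - z)) = n * ω ^ (n - 1) := by
  classical
  have hnodal : Lagrange.nodal (nodes n) id = Pn n := by
    rw [Lagrange.nodal_eq]; simpa using prod_nodes (n := n) hn
  have h1 := Lagrange.eval_nodal_derivative_eval_node_eq (v := (id : ℂ → ℂ)) hω
  rw [hnodal] at h1
  have h2 : derivative (Pn n) = C (n : ℂ) * X ^ (n - 1) := by
    simp [Pn, derivative_X_pow]
  rw [h2] at h1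
  simp only [Lagrange.eval_nodal, id_eq] at h1
  simpa using h1.symm

lemma eval_one_basis (hn : 0 < n) {ω : ℂ} (hω : ω ∈ nodes n) :
    (Lagrange.basis (nodes n) id ω).eval 1 = (-ω) * (QQ n).eval ω := by
  have hωn : ω ^ n = -1 := (mem_nodes hn).mp hω
  have hne : (n : ℂ) ≠ 0 := by exact_mod_cast hn.ne'
  have hω0 : ω ≠ 0 := node_ne_zero hn hωn
  have h1ω : (1 : ℂ) - ω ≠ 0 := sub_ne_zero.mpr (Ne.symm (node_ne_one hωn))
  have hpow : ω ^ (n - 1) = -ω⁻¹ := by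
    have h2 : ω ^ (n - 1) * ω = -1 := by
      rw [← pow_succ]
      rw [(by omega : n - 1 + 1 = n), hωn]
    field_simp
    linear_combination h2
  have hbz : (Lagrange.basis (nodes n) id ω).eval 1
      = (∏ z ∈ (nodes n).erase ω, (ω - z)⁻¹) * ∏ z ∈ (nodes n).erase ω, (1 - z) := by
    simp only [Lagrange.basis, eval_prod, Lagrange.basisDivisor, eval_mul, eval_C, eval_sub,
      eval_X, id_eq]
    rw [← Finset.prod_mul_distrib]
  rw [hbz, Finset.prod_inv_distrib, prod_erase_sub hn hω, prod_erase_one_sub hn hω,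
    eval_QQ n hωn (node_ne_one hωn), hpow]
  field_simp

lemma conj_QQ_eval (hn : 0 < n) {ω : ℂ} (hω : ω ∈ nodes n) :
    (starRingEnd ℂ) ((QQ n).eval ω) = -ω * (QQ n).eval ω := by
  have hωn : ω ^ n = -1 := (mem_nodes hn).mp hω
  have hne : (n : ℂ) ≠ 0 := by exact_mod_cast hn.ne'
  have hω0 : ω ≠ 0 := node_ne_zero hn hωn
  have h1ω : (1 : ℂ) - ω ≠ 0 := sub_ne_zero.mpr (Ne.symm (node_ne_one hωn))
  have hconj : (starRingEnd ℂ) ω = ω⁻¹ := by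
    have h1 : ω * (starRingEnd ℂ) ω = 1 := by
      rw [Complex.mul_conj]
      norm_cast
      rw [Complex.normSq_eq_norm_sq, node_norm_one hn hωn]
      norm_num
    field_simp
    linear_combination h1
  have hd : (n : ℂ) * (1 - ω) ≠ 0 := mul_ne_zero hne h1ω
  have hioz : (1 : ℂ) - ω⁻¹ = -(ω⁻¹) * (1 - ω) := by field_simp; ring
  have hd' : (n : ℂ) * (1 - ω⁻¹) ≠ 0 := by
    rw [hioz]
    exact mul_ne_zero hne (mul_ne_zero (neg_ne_zero.mpr (inv_ne_zero hω0)) h1ω)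
  rw [eval_QQ n hωn (node_ne_one hωn), map_div₀, map_mul, Complex.conj_natCast, map_sub, map_one,
    hconj, (map_ofNat (starRingEnd ℂ) 2), div_eq_iff hd', hioz]
  have hstep : -ω * (2 / ((n : ℂ) * (1 - ω))) * ((n : ℂ) * (-ω⁻¹ * (1 - ω)))
      = (ω * ω⁻¹) * 2 * (((n : ℂ) * (1 - ω)) * ((n : ℂ) * (1 - ω))⁻¹) := by
    rw [div_eq_mul_inv]; ring
  rw [hstep, mul_inv_cancel₀ hω0, mul_inv_cancel₀ hd]
  ring

lemma key_pos (hn : 0 < n) {ω : ℂ} (hω : ω ∈ nodes n) :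
    -ω * (QQ n).eval ω * (QQ n).eval ω = (((‖(QQ n).eval ω‖ : ℝ) : ℂ)) ^ 2 := by
  have h := conj_QQ_eval hn hω
  calc -ω * (QQ n).eval ω * (QQ n).eval ω
      = (QQ n).eval ω * ((starRingEnd ℂ) ((QQ n).eval ω)) := by rw [h]; ring
    _ = _ := by
        rw [Complex.mul_conj]
        rw [Complex.normSq_eq_norm_sq]
        push_cast
        ring

lemma QQ_eval_ne_zero (hn : 0 < n) {ω : ℂ} (hω : ω ∈ nodes n) : (QQ n).eval ω ≠ 0 := by
  have hωn : ω ^ n = -1 := (mem_nodes hn).mp hω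
  have hne : (n : ℂ) ≠ 0 := by exact_mod_cast hn.ne'
  have h1ω : (1 : ℂ) - ω ≠ 0 := sub_ne_zero.mpr (Ne.symm (node_ne_one hωn))
  rw [eval_QQ n hωn (node_ne_one hωn)]
  exact div_ne_zero (by norm_num) (mul_ne_zero hne h1ω)

theorem extremal (n : ℕ) (hn : 0 < n) (q : Polynomial ℂ) (hdeg : q.degree < (n : ℕ))
    (hq1 : q.eval 1 = 1)
    (hb : ∀ ω : ℂ, ω ^ n = -1 → ‖(1 - ω) * q.eval ω‖ ≤ 2 / n) : q = QQ n := by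
  classical
  have hcard : (nodes n).card = n := card_nodes hn
  have hinj : Set.InjOn (id : ℂ → ℂ) (nodes n) := fun a _ b _ hab => hab
  have hdeg' : q.degree < (nodes n).card := by rw [hcard]; exact_mod_cast hdeg
  have hdegQ : (QQ n).degree < (nodes n).card := by
    rw [hcard]; exact_mod_cast degree_QQ_lt n
  -- basis evaluated at 1
  set b : ℂ → ℂ := fun ω => (Lagrange.basis (nodes n) id ω).eval 1 with hbdef
  have hqsum : ∑ ω ∈ nodes n, q.eval ω * b ω = 1 := by
    have hrec := Lagrange.eq_interpolate (v := id) hinj hdeg'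
    have := congrArg (eval 1) hrec
    rw [hq1, Lagrange.interpolate_apply, eval_finset_sum] at this
    simp only [eval_mul, eval_C, id_eq] at this
    exact this.symm
  have hQsum : ∑ ω ∈ nodes n, (QQ n).eval ω * b ω = 1 := by
    have hrec := Lagrange.eq_interpolate (v := id) (f := QQ n) hinj hdegQ
    have := congrArg (eval 1) hrec
    rw [eval_one_QQ n hn, Lagrange.interpolate_apply, eval_finset_sum] at this
    simp only [eval_mul, eval_C, id_eq] at this
    exact this.symm
  -- real weights
  set u : ℂ → ℝ := fun ω => ‖(QQ n).eval ω‖ ^ 2 with hudef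
  have hbu : ∀ ω ∈ nodes n, (QQ n).eval ω * b ω = ((u ω : ℝ) : ℂ) := by
    intro ω hω
    rw [hbdef]
    simp only
    rw [eval_one_basis hn hω, hudef]
    push_cast
    calc (QQ n).eval ω * (-ω * (QQ n).eval ω) = -ω * (QQ n).eval ω * (QQ n).eval ω := by ring
    _ = _ := key_pos hn hω
  have husum : ∑ ω ∈ nodes n, u ω = 1 := by
    have : ((∑ ω ∈ nodes n, u ω : ℝ) : ℂ) = 1 := by
      push_cast
      rw [← Finset.sum_congr rfl hbu]
      exact hQsum
    exact_mod_cast this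
  -- termwise bound
  have hnorm_b : ∀ ω ∈ nodes n, ‖b ω‖ = ‖(QQ n).eval ω‖ := by
    intro ω hω
    have hωn : ω ^ n = -1 := (mem_nodes hn).mp hω
    rw [hbdef]
    simp only
    rw [eval_one_basis hn hω, norm_mul, norm_neg, node_norm_one hn hωn, one_mul]
  have hqle : ∀ ω ∈ nodes n, ‖q.eval ω‖ ≤ ‖(QQ n).eval ω‖ := by
    intro ω hω
    have hωn : ω ^ n = -1 := (mem_nodes hn).mp hω
    have h1ω : (1 : ℂ) - ω ≠ 0 := sub_ne_zero.mpr (Ne.symm (node_ne_one hωn))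
    have h1ωpos : 0 < ‖(1 : ℂ) - ω‖ := norm_pos_iff.mpr h1ω
    have hb' := hb ω hωn
    rw [norm_mul] at hb'
    have hQn : ‖(QQ n).eval ω‖ = 2 / n / ‖(1 : ℂ) - ω‖ := by
      rw [eval_QQ n hωn (node_ne_one hωn)]
      rw [norm_div, norm_mul]
      simp [Complex.norm_natCast]
      ring
    rw [hQn, le_div_iff₀ h1ωpos]
    linarith [hb']
  have hterm_le : ∀ ω ∈ nodes n, (q.eval ω * b ω).re ≤ u ω := by
    intro ω hω
    calc (q.eval ω * b ω).re ≤ ‖q.eval ω * b ω‖ := Complex.re_le_norm _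
    _ = ‖q.eval ω‖ * ‖b ω‖ := norm_mul _ _
    _ ≤ ‖(QQ n).eval ω‖ * ‖b ω‖ :=
        mul_le_mul_of_nonneg_right (hqle ω hω) (norm_nonneg _)
    _ = u ω := by rw [hnorm_b ω hω, hudef]; ring
  have hre_sum : ∑ ω ∈ nodes n, (q.eval ω * b ω).re = 1 := by
    rw [← Complex.re_sum, hqsum, Complex.one_re]
  have hterm_eq : ∀ ω ∈ nodes n, (q.eval ω * b ω).re = u ω := by
    have := (Finset.sum_eq_sum_iff_of_le hterm_le).mp (by rw [hre_sum, husum])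
    intro ω hω
    exact this ω hω
  -- each term is real and equals u, so q matches QQ at nodes
  have heval_eq : ∀ ω ∈ nodes n, q.eval ω = (QQ n).eval ω := by
    intro ω hω
    have h1 : (q.eval ω * b ω).re = u ω := hterm_eq ω hω
    have h2 : ‖q.eval ω * b ω‖ ≤ u ω := by
      calc ‖q.eval ω * b ω‖ = ‖q.eval ω‖ * ‖b ω‖ := norm_mul _ _
      _ ≤ ‖(QQ n).eval ω‖ * ‖b ω‖ :=
          mul_le_mul_of_nonneg_right (hqle ω hω) (norm_nonneg _)
      _ = u ω := by rw [hnorm_b ω hω, hudef]; ring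
    have him : (q.eval ω * b ω).im = 0 := by
      have hsq : ‖q.eval ω * b ω‖ ^ 2
          = (q.eval ω * b ω).re * (q.eval ω * b ω).re
            + (q.eval ω * b ω).im * (q.eval ω * b ω).im := by
        rw [Complex.sq_norm, Complex.normSq_apply]
      have hnn : (0 : ℝ) ≤ ‖q.eval ω * b ω‖ := norm_nonneg _
      have him2 : (q.eval ω * b ω).im * (q.eval ω * b ω).im ≤ 0 := by nlinarith
      exact mul_self_eq_zero.mp (le_antisymm him2 (mul_self_nonneg _))
    have hterm : q.eval ω * b ω = ((u ω : ℝ) : ℂ) := by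
      apply Complex.ext
      · rw [h1]; simp
      · rw [him]; simp
    have hbne : b ω ≠ 0 := by
      rw [hbdef]
      simp only
      rw [eval_one_basis hn hω]
      exact mul_ne_zero (neg_ne_zero.mpr (node_ne_zero hn ((mem_nodes hn).mp hω)))
        (QQ_eval_ne_zero hn hω)
    have := hbu ω hω
    rw [← this] at hterm
    exact mul_right_cancel₀ hbne hterm
  exact Polynomial.eq_of_degrees_lt_of_eval_finset_eq _ hdeg' hdegQ heval_eq

noncomputable def pp (h : ℕ → ℕ → ℝ) : ℕ → Polynomial ℂ
  | 0 => 1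
  | (m+1) => pp h m
      - (1 - X) * ∑ j ∈ (range (m+1)).attach, C ((h (m+1) (j.1+1) : ℝ) : ℂ) * pp h j.1
  decreasing_by
    · exact Nat.lt_succ_self m
    · exact mem_range.mp j.2

lemma pp_zero (h : ℕ → ℕ → ℝ) : pp h 0 = 1 := by rw [pp]

lemma pp_succ (h : ℕ → ℕ → ℝ) (m : ℕ) :
    pp h (m+1) = pp h m
      - (1 - X) * ∑ j ∈ range (m+1), C ((h (m+1) (j+1) : ℝ) : ℂ) * pp h j := by
  rw [pp, ← Finset.sum_attach (range (m+1)) (fun j => C ((h (m+1) (j+1) : ℝ) : ℂ) * pp h j)]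

def cc (h : ℕ → ℕ → ℝ) (m j : ℕ) : ℝ := ∑ i ∈ Finset.Ico j m, h (i+1) (j+1)

lemma cc_self (h : ℕ → ℕ → ℝ) (m : ℕ) : cc h m m = 0 := by simp [cc]

lemma cc_succ (h : ℕ → ℕ → ℝ) {m j : ℕ} (hj : j ≤ m) :
    cc h (m+1) j = cc h m j + h (m+1) (j+1) := by
  rw [cc, cc, Finset.sum_Ico_succ_top hj]

lemma pp_eval_one (h : ℕ → ℕ → ℝ) (m : ℕ) : (pp h m).eval 1 = 1 := by
  induction m with
  | zero => simp [pp_zero]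
  | succ m ih => simp [pp_succ, ih]

lemma natDegree_pp_le (h : ℕ → ℕ → ℝ) (m : ℕ) : (pp h m).natDegree ≤ m := by
  induction m using Nat.strong_induction_on with
  | _ m ih =>
    match m with
    | 0 => simp [pp_zero]
    | (m+1) =>
      rw [pp_succ]
      have h1 : (1 - X : Polynomial ℂ).natDegree ≤ 1 :=
        le_trans (natDegree_sub_le _ _) (by simp)
      have h2 : (∑ j ∈ range (m+1), C ((h (m+1) (j+1) : ℝ) : ℂ) * pp h j).natDegree ≤ m := by
        refine natDegree_sum_le_of_forall_le _ _ fun j hj => ?_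
        refine le_trans (natDegree_mul_le) ?_
        have hj' : j ≤ m := Nat.lt_succ_iff.mp (mem_range.mp hj)
        have := ih j (by omega)
        simp only [natDegree_C, zero_add]
        omega
      have h3 : ((1 - X) * ∑ j ∈ range (m+1),
          C ((h (m+1) (j+1) : ℝ) : ℂ) * pp h j).natDegree ≤ m + 1 :=
        le_trans natDegree_mul_le (by omega)
      exact le_trans (natDegree_sub_le _ _)
        (max_le (le_trans (ih m (by omega)) (by omega)) h3)

lemma pp_eq_cc (h : ℕ → ℕ → ℝ) (m : ℕ) :
    pp h m = 1 - (1 - X) * ∑ j ∈ range m, C ((cc h m j : ℝ) : ℂ) * pp h j := by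
  induction m with
  | zero => simp [pp_zero]
  | succ m ih =>
    rw [pp_succ, ih]
    rw [Finset.sum_range_succ (f := fun j => C ((cc h (m+1) j : ℝ) : ℂ) * pp h j)]
    have htop : cc h (m+1) m = h (m+1) (m+1) := by
      rw [cc_succ h (le_refl m), cc_self]; ring
    rw [htop]
    have hsum : (∑ j ∈ range m, C ((cc h (m+1) j : ℝ) : ℂ) * pp h j)
        = ∑ j ∈ range m, C (((cc h m j + h (m+1) (j+1) : ℝ)) : ℂ) * pp h j := by
      refine Finset.sum_congr rfl fun j hj => ?_
      rw [cc_succ h (le_of_lt (mem_range.mp hj))]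
    rw [hsum]
    rw [Finset.sum_range_succ (f := fun j => C ((h (m+1) (j+1) : ℝ) : ℂ) * pp h j)]
    push_cast
    simp only [map_add, add_mul]
    rw [Finset.sum_add_distrib]
    ring

lemma geomP_coeff (n j : ℕ) : (geomP n).coeff j = if j < n then 1 else 0 := by
  unfold geomP
  rw [finset_sum_coeff]
  simp only [coeff_X_pow]
  rw [Finset.sum_ite_eq (range n) j (fun _ => (1 : ℂ))]
  simp [mem_range]

lemma QQ_coeff_top (n : ℕ) (hn : 0 < n) : (QQ n).coeff (n - 1) = ((n : ℂ))⁻¹ := by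
  rw [QQ, coeff_C_mul, geomP_coeff]
  simp [Nat.sub_lt hn]

lemma natDegree_QQ_le (n : ℕ) (hn : 0 < n) : (QQ n).natDegree ≤ n - 1 := by
  have hlt : (QQ n).natDegree < n := by
    by_cases hz : QQ n = 0
    · simp [hz, hn]
    · exact (natDegree_lt_iff_degree_lt hz).mpr (by exact_mod_cast degree_QQ_lt n)
  omega

lemma geomP_succ (n : ℕ) : geomP (n+1) = X * geomP n + 1 := by
  unfold geomP
  rw [geom_sum_succ]

lemma QQ_identity (k : ℕ) :
    C ((k : ℂ) + 2) * (QQ (k+1) - QQ (k+2)) + 1 - QQ (k+1)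
      - C ((k : ℂ) + 1) * ((1 - X) * QQ (k+1)) = 0 := by
  have hk1 : ((k : ℂ) + 1) ≠ 0 := by
    intro hc
    have h0 : ((k : ℂ) + 1) = ((k + 1 : ℕ) : ℂ) := by push_cast; ring
    rw [h0] at hc
    exact_mod_cast hc
  have hk2 : ((k : ℂ) + 2) ≠ 0 := by
    intro hc
    have h0 : ((k : ℂ) + 2) = ((k + 2 : ℕ) : ℂ) := by push_cast; ring
    rw [h0] at hc
    exact_mod_cast hc
  have ha : C ((k : ℂ) + 1) * C (((k : ℂ) + 1)⁻¹) = 1 := by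
    rw [← C_mul, mul_inv_cancel₀ hk1, C_1]
  have hb : C ((k : ℂ) + 2) * C (((k : ℂ) + 2)⁻¹) = 1 := by
    rw [← C_mul, mul_inv_cancel₀ hk2, C_1]
  have h4 : X * geomP (k+1) = geomP (k+2) - 1 := by
    rw [(by exact geomP_succ (k+1) : geomP (k+2) = X * geomP (k+1) + 1)]
    ring
  have hba : C ((k : ℂ) + 2) = C ((k : ℂ) + 1) + 1 := by
    rw [(by ring : (k : ℂ) + 2 = ((k : ℂ) + 1) + 1), C_add, C_1]
  have hQ1 : QQ (k+1) = C (((k : ℂ) + 1)⁻¹) * geomP (k+1) := by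
    rw [QQ]; norm_num
  have hQ2 : QQ (k+2) = C (((k : ℂ) + 2)⁻¹) * geomP (k+2) := by
    rw [QQ]; norm_num
  rw [hQ1, hQ2]
  linear_combination (X * geomP (k+1)) * ha + (- geomP (k+2)) * hb + h4
    + (C (((k : ℂ) + 1)⁻¹) * geomP (k+1)) * hba

lemma natDegree_S_le (h : ℕ → ℕ → ℝ) (m : ℕ) :
    (∑ j ∈ range (m+1), C ((h (m+1) (j+1) : ℝ) : ℂ) * pp h j).natDegree ≤ m := by
  refine natDegree_sum_le_of_forall_le _ _ fun j hj => ?_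
  refine le_trans (natDegree_mul_le) ?_
  have hj' : j ≤ m := Nat.lt_succ_iff.mp (mem_range.mp hj)
  have := natDegree_pp_le h j
  simp only [natDegree_C, zero_add]
  omega

lemma coeff_step (h : ℕ → ℕ → ℝ) (s : ℕ) (hs : (pp h (s+1)).coeff (s+1) ≠ 0) :
    (pp h s).coeff s ≠ 0 := by
  intro hc
  apply hs
  rw [pp_succ, coeff_sub]
  have hppm : (pp h s).coeff (s+1) = 0 :=
    coeff_eq_zero_of_natDegree_lt (by have := natDegree_pp_le h s; omega)
  set S := ∑ j ∈ range (s+1), C ((h (s+1) (j+1) : ℝ) : ℂ) * pp h j with hSdef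
  have hS1 : S.coeff (s+1) = 0 :=
    coeff_eq_zero_of_natDegree_lt (by rw [hSdef]; have := natDegree_S_le h s; omega)
  have hSs : S.coeff s = ((h (s+1) (s+1) : ℝ) : ℂ) * (pp h s).coeff s := by
    rw [hSdef, finset_sum_coeff, Finset.sum_range_succ]
    have hzero : ∀ j ∈ range s, (C ((h (s+1) (j+1) : ℝ) : ℂ) * pp h j).coeff s = 0 := by
      intro j hj
      rw [coeff_C_mul]
      rw [coeff_eq_zero_of_natDegree_lt (by
        have := natDegree_pp_le h j
        have := mem_range.mp hj
        omega)]
      ring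
    rw [Finset.sum_eq_zero hzero, coeff_C_mul, zero_add]
  have hmul : ((1 - X) * S).coeff (s+1) = S.coeff (s+1) - S.coeff s := by
    rw [sub_mul, one_mul, coeff_sub, coeff_X_mul]
  rw [hppm, hmul, hS1, hSs, hc]
  ring

lemma coeff_nonzero (h : ℕ → ℕ → ℝ) (N : ℕ)
    (hpin : ∀ m, N - 1 ≤ m → pp h m = QQ (m+1)) : ∀ j, (pp h j).coeff j ≠ 0 := by
  have hpinned : ∀ j, N - 1 ≤ j → (pp h j).coeff j ≠ 0 := by
    intro j hj
    rw [hpin j hj]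
    have hq := QQ_coeff_top (j+1) (by omega)
    have : (j + 1) - 1 = j := by omega
    rw [this] at hq
    rw [hq]
    have : ((j : ℂ) + 1) ≠ 0 := by
      intro hcc
      have h0 : ((j : ℂ) + 1) = ((j + 1 : ℕ) : ℂ) := by push_cast; ring
      rw [h0] at hcc
      exact_mod_cast hcc
    simpa using inv_ne_zero (by exact_mod_cast this)
  have haux : ∀ i, (pp h (N-1-i)).coeff (N-1-i) ≠ 0 := by
    intro i
    induction i with
    | zero => simpa using hpinned (N-1) (le_refl _)
    | succ i ih =>
      by_cases hc : i < N - 1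
      · have heq : N-1-(i+1)+1 = N-1-i := by omega
        exact coeff_step h (N-1-(i+1)) (by rw [heq]; exact ih)
      · have heq : N-1-(i+1) = N-1-i := by omega
        rw [heq]; exact ih
  intro j
  by_cases hj : N - 1 ≤ j
  · exact hpinned j hj
  · have : j = N-1-(N-1-j) := by omega
    rw [this]
    exact haux (N-1-j)

lemma indep (h : ℕ → ℕ → ℝ) (hcoeff : ∀ j, (pp h j).coeff j ≠ 0) :
    ∀ M (γ : ℕ → ℝ), (∑ j ∈ range (M+1), C ((γ j : ℝ) : ℂ) * pp h j) = 0 →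
      ∀ j ≤ M, γ j = 0 := by
  intro M
  induction M with
  | zero =>
    intro γ h0 j hj
    interval_cases j
    rw [Finset.sum_range_one, pp_zero, mul_one] at h0
    have := C_eq_zero.mp h0
    exact_mod_cast this
  | succ M ih =>
    intro γ h0 j hj
    have htop : γ (M+1) = 0 := by
      have hcoe := congrArg (fun p => p.coeff (M+1)) h0
      simp only [finset_sum_coeff, coeff_C_mul, coeff_zero] at hcoe
      rw [Finset.sum_range_succ] at hcoe
      have hzero : ∀ i ∈ range (M+1), ((γ i : ℝ) : ℂ) * (pp h i).coeff (M+1) = 0 := by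
        intro i hi
        rw [coeff_eq_zero_of_natDegree_lt (by
          have := natDegree_pp_le h i
          have := mem_range.mp hi
          omega)]
        ring
      rw [Finset.sum_eq_zero hzero, zero_add] at hcoe
      rcases mul_eq_zero.mp hcoe with hg | hcz
      · exact_mod_cast hg
      · exact absurd hcz (hcoeff (M+1))
    rcases Nat.lt_succ_iff_lt_or_eq.mp (Nat.lt_succ_of_le hj) with hj' | hj'
    · apply ih γ _ j (by omega)
      rw [Finset.sum_range_succ] at h0
      rw [htop] at h0
      simpa using h0
    · rw [hj']; exact htop

lemma one_sub_X_ne_zero : (1 - X : Polynomial ℂ) ≠ 0 := by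
  intro hc
  have := congrArg (eval 0) hc
  simp at this

lemma beta_zero (h : ℕ → ℕ → ℝ) (N k : ℕ) (hk : N - 1 ≤ k)
    (hpin : ∀ m, N - 1 ≤ m → pp h m = QQ (m+1)) :
    ∀ j ≤ k, h (k+1) (j+1) + cc h k j / ((k : ℝ) + 2)
      - (if j = k then ((k : ℝ) + 1)/((k : ℝ) + 2) else 0) = 0 := by
  set β : ℕ → ℝ := fun j => h (k+1) (j+1) + cc h k j / ((k : ℝ) + 2)
      - (if j = k then ((k : ℝ) + 1)/((k : ℝ) + 2) else 0) with hβ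
  have hk2R : ((k : ℝ) + 2) ≠ 0 := by positivity
  have hk2 : ((k : ℂ) + 2) ≠ 0 := by
    intro hc
    have h0 : ((k : ℂ) + 2) = ((k + 2 : ℕ) : ℂ) := by push_cast; ring
    rw [h0] at hc
    exact_mod_cast hc
  set Sβ : Polynomial ℂ := ∑ j ∈ range (k+1), C ((β j : ℝ) : ℂ) * pp h j with hSβ
  set Sh : Polynomial ℂ := ∑ j ∈ range (k+1), C ((h (k+1) (j+1) : ℝ) : ℂ) * pp h j with hSh
  set Sc : Polynomial ℂ := ∑ j ∈ range k, C ((cc h k j : ℝ) : ℂ) * pp h j with hSc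
  have hSS : ∀ j, ((k : ℂ) + 2) * ((β j : ℝ) : ℂ)
      = ((k : ℂ) + 2) * ((h (k+1) (j+1) : ℝ) : ℂ) + ((cc h k j : ℝ) : ℂ)
        - (if j = k then ((k : ℂ) + 1) else 0) := by
    intro j
    have hreal : ((k : ℝ) + 2) * β j
        = ((k : ℝ) + 2) * h (k+1) (j+1) + cc h k j
          - (if j = k then ((k : ℝ) + 1) else 0) := by
      rw [hβ]
      by_cases hjk : j = k
      · simp only [if_pos hjk]
        field_simp
      · simp only [if_neg hjk]
        field_simp
        ring
    by_cases hjk : j = k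
    · simp only [if_pos hjk] at hreal ⊢
      have hC := congrArg (fun x : ℝ => (x : ℂ)) hreal
      push_cast at hC
      linear_combination hC
    · simp only [if_neg hjk] at hreal ⊢
      have hC := congrArg (fun x : ℝ => (x : ℂ)) hreal
      push_cast at hC
      linear_combination hC
  have hterm : ∀ j ∈ range (k+1),
      C ((k : ℂ) + 2) * (C ((β j : ℝ) : ℂ) * pp h j)
        = C ((k : ℂ) + 2) * (C ((h (k+1) (j+1) : ℝ) : ℂ) * pp h j)
          + C ((cc h k j : ℝ) : ℂ) * pp h j
          - (if j = k then C ((k : ℂ) + 1) * pp h k else 0) := by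
    intro j hj
    have h1 : C ((k : ℂ) + 2) * (C ((β j : ℝ) : ℂ) * pp h j)
        = C (((k : ℂ) + 2) * ((β j : ℝ) : ℂ)) * pp h j := by
      rw [C_mul]; ring
    rw [h1, hSS j]
    by_cases hjk : j = k
    · simp only [if_pos hjk]
      rw [C_sub, C_add, C_mul, hjk]
      ring
    · simp only [if_neg hjk, sub_zero]
      rw [C_add, C_mul]
      ring
  have hsum : C ((k : ℂ) + 2) * Sβ
      = C ((k : ℂ) + 2) * Sh + Sc - C ((k : ℂ) + 1) * pp h k := by
    rw [hSβ, Finset.mul_sum, Finset.sum_congr rfl hterm]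
    rw [Finset.sum_sub_distrib, Finset.sum_add_distrib]
    rw [Finset.sum_ite_eq' (range (k+1)) k (fun _ => C ((k : ℂ) + 1) * pp h k)]
    simp only [mem_range, lt_add_iff_pos_right, zero_lt_one, if_true]
    rw [← Finset.mul_sum, ← hSh]
    congr 1
    congr 1
    rw [Finset.sum_range_succ, cc_self]
    simp [← hSc]
  have hmain : (1 - X) * (C ((k : ℂ) + 2) * Sβ) = 0 := by
    rw [hsum]
    have h1 : (1 - X) * Sh = pp h k - pp h (k+1) := by
      rw [pp_succ h k]; ring
    have h2 : (1 - X) * Sc = 1 - pp h k := by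
      have := pp_eq_cc h k
      rw [← hSc] at this
      linear_combination this
    calc (1 - X) * (C ((k : ℂ) + 2) * Sh + Sc - C ((k : ℂ) + 1) * pp h k)
        = C ((k : ℂ) + 2) * ((1 - X) * Sh) + (1 - X) * Sc
          - C ((k : ℂ) + 1) * ((1 - X) * pp h k) := by ring
      _ = C ((k : ℂ) + 2) * (pp h k - pp h (k+1)) + (1 - pp h k)
          - C ((k : ℂ) + 1) * ((1 - X) * pp h k) := by rw [h1, h2]
      _ = 0 := by
          rw [hpin k hk, hpin (k+1) (by omega)]
          have := QQ_identity k
          linear_combination this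
  have hSβ0 : Sβ = 0 := by
    rcases mul_eq_zero.mp hmain with hc | hc
    · exact absurd hc one_sub_X_ne_zero
    · rcases mul_eq_zero.mp hc with hc' | hc'
      · exact absurd hc' (C_ne_zero.mpr hk2)
      · exact hc'
  intro j hj
  exact indep h (coeff_nonzero h N hpin) k β hSβ0 j hj

lemma cc_top (h : ℕ → ℕ → ℝ) (m : ℕ) : cc h (m+1) m = h (m+1) (m+1) := by
  rw [cc_succ h (le_refl m), cc_self]; ring

lemma traj {V : Type*} [AddCommGroup V] [Module ℝ V] (h : ℕ → ℕ → ℝ) (T : V → V)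
    (y0 : V) (y : ℕ → V) (hy0 : y 0 = y0)
    (hrec : ∀ m, y (m+1) = y m - ∑ j ∈ range (m+1), h (m+1) (j+1) • (y j - T (y j))) :
    ∀ m, y m = y0 - ∑ j ∈ range m, cc h m j • (y j - T (y j)) := by
  intro m
  induction m with
  | zero => simp [hy0]
  | succ m ih =>
    rw [hrec m, ih]
    rw [Finset.sum_range_succ (f := fun j => cc h (m+1) j • (y j - T (y j))), cc_top]
    have hsum : (∑ j ∈ range m, cc h (m+1) j • (y j - T (y j)))
        = ∑ j ∈ range m, (cc h m j • (y j - T (y j)) + h (m+1) (j+1) • (y j - T (y j))) := by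
      refine Finset.sum_congr rfl fun j hj => ?_
      rw [cc_succ h (le_of_lt (mem_range.mp hj)), add_smul]
    rw [hsum, Finset.sum_add_distrib]
    rw [Finset.sum_range_succ (f := fun j => h (m+1) (j+1) • (y j - T (y j)))]
    abel

/-- **Uniqueness of OHM as the anytime optimal algorithm (Theorem 7.1).**
Consider the fixed-step algorithm `y_{k+1} = y_k − Σ_{j=0}^{k} h_{k+1,j+1}(y_j − T y_j)`.
If for some `N ≥ 1` the algorithm is anytime-beyond-`N`-steps optimal, i.e.
`‖y_k − T y_k‖² ≤ 4‖y₀ − y⋆‖²/(k+1)²` for all `k ≥ N−1`, all `d ≥ 1`, all nonexpansive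
`T : ℝ^d → ℝ^d` with a fixed point and all `y₀`, then for every such `T`, every `y₀` and
every `k ≥ N−1` the iterates satisfy
`y_{k+1} = (1/(k+2))·y₀ + ((k+1)/(k+2))·T y_k` (the OHM recursion; in particular, for
`N = 1`, OHM is the only anytime optimal algorithm). -/
theorem ohm_unique_anytime_optimal (h : ℕ → ℕ → ℝ) (N : ℕ) (hN : 1 ≤ N)
    (hopt : ∀ (d : ℕ), 1 ≤ d →
      ∀ (T : EuclideanSpace ℝ (Fin d) → EuclideanSpace ℝ (Fin d)),
        (∀ x y, ‖T x - T y‖ ≤ ‖x - y‖) →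
      ∀ (ystar : EuclideanSpace ℝ (Fin d)), T ystar = ystar →
      ∀ (y0 : EuclideanSpace ℝ (Fin d)) (y : ℕ → EuclideanSpace ℝ (Fin d)),
        y 0 = y0 →
        (∀ m : ℕ, y (m + 1)
          = y m - ∑ j ∈ Finset.range (m + 1), h (m + 1) (j + 1) • (y j - T (y j))) →
        ∀ k, N - 1 ≤ k →
          ‖y k - T (y k)‖ ^ 2 ≤ 4 * ‖y0 - ystar‖ ^ 2 / ((k : ℝ) + 1) ^ 2) :
    ∀ (d : ℕ), 1 ≤ d →
      ∀ (T : EuclideanSpace ℝ (Fin d) → EuclideanSpace ℝ (Fin d)),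
        (∀ x y, ‖T x - T y‖ ≤ ‖x - y‖) →
      ∀ (ystar : EuclideanSpace ℝ (Fin d)), T ystar = ystar →
      ∀ (y0 : EuclideanSpace ℝ (Fin d)) (y : ℕ → EuclideanSpace ℝ (Fin d)),
        y 0 = y0 →
        (∀ m : ℕ, y (m + 1)
          = y m - ∑ j ∈ Finset.range (m + 1), h (m + 1) (j + 1) • (y j - T (y j))) →
        ∀ k, N - 1 ≤ k →
          y (k + 1) = ((1 : ℝ) / ((k : ℝ) + 2)) • y0
            + (((k : ℝ) + 1) / ((k : ℝ) + 2)) • T (y k) := by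
  intro d hd T hT ystar hstar y0 y hy0 hrec k hk
  -- Step 1: the residual polynomials are pinned to the OHM polynomials
  have hpin : ∀ m, N - 1 ≤ m → pp h m = QQ (m+1) := by
    intro m hm
    have hdeg : (pp h m).degree < ((m+1 : ℕ) : WithBot ℕ) := by
      have h1 : (pp h m).degree ≤ (m : ℕ) := natDegree_le_iff_degree_le.mp (natDegree_pp_le h m)
      exact lt_of_le_of_lt h1 (by exact_mod_cast Nat.lt_succ_self m)
    refine extremal (m+1) (Nat.succ_pos m) (pp h m) (by exact_mod_cast hdeg)
      (pp_eval_one h m) ?_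
    intro ω hω
    have hω1 : ‖ω‖ = 1 := node_norm_one (Nat.succ_pos m) hω
    set E := Complex.orthonormalBasisOneI.repr with hE
    set T2 : EuclideanSpace ℝ (Fin 2) → EuclideanSpace ℝ (Fin 2) :=
      fun v => E (ω * E.symm v) with hT2def
    have hT2 : ∀ x z : EuclideanSpace ℝ (Fin 2), ‖T2 x - T2 z‖ ≤ ‖x - z‖ := by
      intro x z
      have : T2 x - T2 z = E (ω * (E.symm x - E.symm z)) := by
        rw [hT2def]
        simp only
        rw [← map_sub E, mul_sub]
      rw [this, E.norm_map, norm_mul, hω1, one_mul, ← map_sub E.symm, E.symm.norm_map]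
    have hfix : T2 0 = 0 := by
      rw [hT2def]
      simp only
      rw [map_zero E.symm, mul_zero, map_zero E]
    set y2 : ℕ → EuclideanSpace ℝ (Fin 2) := fun i => E ((pp h i).eval ω) with hy2
    have hy20 : y2 0 = E 1 := by
      rw [hy2]
      simp only
      rw [pp_zero, eval_one]
    have hres : ∀ i, y2 i - T2 (y2 i) = E ((1 - ω) * (pp h i).eval ω) := by
      intro i
      rw [hy2, hT2def]
      simp only
      rw [E.symm_apply_apply, ← map_sub E]
      congr 1
      ring
    have hyrec2 : ∀ m' : ℕ, y2 (m' + 1)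
        = y2 m' - ∑ j ∈ Finset.range (m' + 1), h (m' + 1) (j + 1) • (y2 j - T2 (y2 j)) := by
      intro m'
      have hceval : (pp h (m'+1)).eval ω
          = (pp h m').eval ω
            - ∑ j ∈ range (m'+1), ((h (m'+1) (j+1) : ℝ) : ℂ) * ((1 - ω) * (pp h j).eval ω) := by
        have := congrArg (eval ω) (pp_succ h m')
        rw [eval_sub, eval_mul, eval_finset_sum] at this
        simp only [eval_mul, eval_C, eval_sub, eval_one, eval_X] at this
        rw [this, Finset.mul_sum]
        congr 1
        refine Finset.sum_congr rfl fun j hj => ?_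
        ring
      rw [hy2]
      simp only
      rw [hceval]
      rw [map_sub E, map_sum E]
      congr 1
      refine Finset.sum_congr rfl fun j hj => ?_
      rw [hres j]
      rw [← E.map_smul]
      congr 1
    have hbound := hopt 2 (by norm_num) T2 hT2 0 hfix (E 1) y2 hy20 hyrec2 m hm
    rw [hres m] at hbound
    rw [E.norm_map] at hbound
    have hnorm1 : ‖E 1 - (0 : EuclideanSpace ℝ (Fin 2))‖ = 1 := by
      rw [sub_zero, E.norm_map, norm_one]
    rw [hnorm1] at hbound
    have hm1 : (0 : ℝ) < (m : ℝ) + 1 := by positivity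
    have habs : (0 : ℝ) ≤ ‖(1 - ω) * (pp h m).eval ω‖ := norm_nonneg _
    have hb2 : ‖(1 - ω) * (pp h m).eval ω‖ ≤ 2 / ((m : ℝ) + 1) := by
      have h4 : 4 * (1 : ℝ) ^ 2 / ((m : ℝ) + 1) ^ 2 = (2 / ((m : ℝ) + 1)) ^ 2 := by
        field_simp
        ring
      rw [h4] at hbound
      nlinarith [sq_nonneg (‖(1 - ω) * (pp h m).eval ω‖ - 2 / ((m : ℝ) + 1)),
        div_pos (by norm_num : (0:ℝ) < 2) hm1]
    calc ‖(1 - ω) * (pp h m).eval ω‖ ≤ 2 / ((m : ℝ) + 1) := hb2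
      _ = 2 / ((m + 1 : ℕ) : ℝ) := by push_cast; ring
  -- Step 2: the update coefficients are the OHM coefficients
  have hβ := beta_zero h N k hk hpin
  -- Step 3: trajectory identity for the given instance
  have htraj := traj h T y0 y hy0 hrec
  have hS : (∑ j ∈ range k, cc h k j • (y j - T (y j))) = y0 - y k := by
    rw [htraj k]; abel
  -- Step 4: conclude
  rw [hrec k]
  have hcoef : ∀ j ∈ range (k+1), h (k+1) (j+1) • (y j - T (y j))
      = (if j = k then (((k:ℝ)+1)/((k:ℝ)+2)) • (y j - T (y j)) else 0)
        - ((1/((k:ℝ)+2)) * cc h k j) • (y j - T (y j)) := by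
    intro j hj
    have hb := hβ j (Nat.lt_succ_iff.mp (mem_range.mp hj))
    by_cases hjk : j = k
    · rw [if_pos hjk] at hb ⊢
      have hcoe : h (k+1) (j+1) = ((k:ℝ)+1)/((k:ℝ)+2) - (1/((k:ℝ)+2)) * cc h k j := by
        field_simp at hb ⊢
        try linarith
      rw [hcoe, sub_smul]
    · rw [if_neg hjk] at hb ⊢
      have hcoe : h (k+1) (j+1) = - ((1/((k:ℝ)+2)) * cc h k j) := by
        field_simp at hb ⊢
        try linarith
      rw [hcoe, neg_smul]
      abel
  rw [Finset.sum_congr rfl hcoef, Finset.sum_sub_distrib]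
  rw [Finset.sum_ite_eq' (range (k+1)) k
    (fun j => (((k:ℝ)+1)/((k:ℝ)+2)) • (y j - T (y j)))]
  simp only [mem_range, lt_add_iff_pos_right, zero_lt_one, if_true]
  have hs2 : (∑ j ∈ range (k+1), ((1/((k:ℝ)+2)) * cc h k j) • (y j - T (y j)))
      = (1/((k:ℝ)+2)) • (y0 - y k) := by
    rw [← hS]
    rw [Finset.sum_range_succ, cc_self]
    simp only [mul_zero, zero_smul, add_zero]
    rw [Finset.smul_sum]
    refine Finset.sum_congr rfl fun j hj => ?_
    rw [smul_smul]
  rw [hs2]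
  match_scalars <;> (field_simp; try ring)
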